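/- Let F be a field of characteristic ≠ 2 and α ∈ F with α ∉ {0, 1, −1}. In the algebra 3C(α): the element 𝟙 := (α+1)⁻¹(x + y + z) is a multiplicative identity (𝟙·v = v for all v); the element w := 𝟙 − x is an idempotent (w² = w); and w·x = 0 and w·(y − z) = (1−α)(y − z), so that {w, x, y − z} is a basis of 3C(α) consisting of eigenvectors of left multiplication by w with eigenvalues 1, 0, and 1−α respectively. -/
import Mathlib


/-- The multiplication of the algebra `3C(η)` in the basis `x = e 0`, `y = e 1`, `z = e 2`:
each basis vector is an idempotent and the product of two distinct basis vectors is
`(η/2)` times (their sum minus the third one). -/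
def mul3C {F : Type*} [Field F] (η : F) (u v : Fin 3 → F) : Fin 3 → F :=
  ![u 0 * v 0 + η/2 * (u 0*v 1 + u 1*v 0 + u 0*v 2 + u 2*v 0 - u 1*v 2 - u 2*v 1),
    u 1 * v 1 + η/2 * (u 0*v 1 + u 1*v 0 + u 1*v 2 + u 2*v 1 - u 0*v 2 - u 2*v 0),
    u 2 * v 2 + η/2 * (u 0*v 2 + u 2*v 0 + u 1*v 2 + u 2*v 1 - u 0*v 1 - u 1*v 0)]

set_option maxHeartbeats 1000000 in
/-- **The identity and the skew axis `w` of `3C(α)`.**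
Let `F` be a field of characteristic `≠ 2` and `α ∉ {0, 1, -1}`.  In the algebra `3C(α)`
(realized on `Fin 3 → F` with multiplication `mul3C α` and basis `x, y, z`), the element
`𝟙 := (α+1)⁻¹ (x+y+z)` is a multiplicative identity, `w := 𝟙 - x` is an idempotent,
`w·x = 0`, `w·(y-z) = (1-α)(y-z)`, and `{w, x, y-z}` is a basis of eigenvectors of left
multiplication by `w` with eigenvalues `1, 0, 1-α`. -/
theorem threeC_identity_and_axis
    {F : Type*} [Field F] (hchar : (2 : F) ≠ 0)
    (α : F) (hα0 : α ≠ 0) (hα1 : α ≠ 1) (hαm1 : α ≠ -1)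
    (x y z one w : Fin 3 → F)
    (hx : x = ![1, 0, 0]) (hy : y = ![0, 1, 0]) (hz : z = ![0, 0, 1])
    (hone : one = (α + 1)⁻¹ • (x + y + z)) (hw : w = one - x) :
    (∀ v : Fin 3 → F, mul3C α one v = v) ∧
    mul3C α w w = w ∧
    mul3C α w x = 0 ∧
    mul3C α w (y - z) = (1 - α) • (y - z) ∧
    LinearIndependent F ![w, x, y - z] ∧
    Submodule.span F {w, x, y - z} = ⊤ := by
  have h1 : α + 1 ≠ 0 := fun h => hαm1 (eq_neg_of_add_eq_zero_left h)
  have hc : (α + 1) * (α + 1)⁻¹ = 1 := mul_inv_cancel₀ h1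
  have h2 : (2 : F)⁻¹ * 2 = 1 := inv_mul_cancel₀ hchar
  have hone' : one = ![(α+1)⁻¹, (α+1)⁻¹, (α+1)⁻¹] := by
    subst hone hx hy hz
    funext i; fin_cases i <;> simp
  have hw' : w = ![(α+1)⁻¹ - 1, (α+1)⁻¹, (α+1)⁻¹] := by
    subst hw hx; rw [hone']
    funext i; fin_cases i <;> simp
  have hyz : y - z = ![0, 1, -1] := by
    subst hy hz; funext i; fin_cases i <;> simp
  rw [hone', hw', hyz, hx]
  refine ⟨?_, ?_, ?_, ?_, ?_, ?_⟩
  · intro v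
    funext i
    fin_cases i
    · simp [mul3C]; linear_combination (v 0) * hc + (α * (α+1)⁻¹ * v 0) * h2
    · simp [mul3C]; linear_combination (v 1) * hc + (α * (α+1)⁻¹ * v 1) * h2
    · simp [mul3C]; linear_combination (v 2) * hc + (α * (α+1)⁻¹ * v 2) * h2
  · funext i
    fin_cases i
    · simp [mul3C]
      linear_combination ((α+1)⁻¹ - 2) * hc + (α * ((α+1)⁻¹^2 - 2*(α+1)⁻¹)) * h2
    · simp [mul3C]; linear_combination (α+1)⁻¹ * hc + (α * (α+1)⁻¹^2) * h2
    · simp [mul3C]; linear_combination (α+1)⁻¹ * hc + (α * (α+1)⁻¹^2) * h2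
  · funext i
    fin_cases i
    · simp [mul3C]; linear_combination hc + (α * (α+1)⁻¹) * h2
    · simp [mul3C]
    · simp [mul3C]
  · funext i
    fin_cases i
    · simp [mul3C]
    · simp [mul3C]; linear_combination hc + (α * ((α+1)⁻¹ - 1)) * h2
    · simp [mul3C]; linear_combination (-1 : F) * hc + (α * (1 - (α+1)⁻¹)) * h2
  · rw [Fintype.linearIndependent_iff]
    intro g hg
    have h0 := congrFun hg 0
    have h1' := congrFun hg 1
    have h2' := congrFun hg 2
    simp [Fin.sum_univ_three] at h0 h1' h2'
    have hh : (2:F) * (g 0 * (α + 1)⁻¹) = 0 := by linear_combination h1' + h2'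
    have hg0 : g 0 = 0 := by
      rcases mul_eq_zero.1 hh with h | h
      · exact absurd h hchar
      · rcases mul_eq_zero.1 h with h | h
        · exact h
        · exact absurd h (inv_ne_zero h1)
    have hg2 : g 2 = 0 := by rw [hg0] at h1'; simpa using h1'
    have hg1 : g 1 = 0 := by rw [hg0] at h0; simpa using h0
    intro i
    fin_cases i
    · exact hg0
    · exact hg1
    · exact hg2
  · rw [eq_top_iff]
    intro v _
    set S := Submodule.span F {![(α+1)⁻¹ - 1, (α+1)⁻¹, (α+1)⁻¹], ![(1:F),0,0], ![(0:F),1,-1]} with hS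
    have hwS : (![(α+1)⁻¹ - 1, (α+1)⁻¹, (α+1)⁻¹] : Fin 3 → F) ∈ S := Submodule.subset_span (by simp)
    have hxS : (![(1:F),0,0] : Fin 3 → F) ∈ S := Submodule.subset_span (by simp)
    have hyzS : (![(0:F),1,-1] : Fin 3 → F) ∈ S := Submodule.subset_span (by simp)
    have key : v = ((α+1) * (v 1 + v 2)/2) • (![(α+1)⁻¹ - 1, (α+1)⁻¹, (α+1)⁻¹] : Fin 3 → F)
        + (v 0 + (α+1) * (v 1 + v 2)/2 * (1 - (α+1)⁻¹)) • (![(1:F),0,0])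
        + ((v 1 - v 2)/2) • (![(0:F),1,-1]) := by
      funext i
      fin_cases i
      · simp; ring
      · simp; linear_combination (-(v 1 + v 2) * (2:F)⁻¹) * hc + (-(v 1)) * h2
      · simp; linear_combination (-(v 1 + v 2) * (2:F)⁻¹) * hc + (-(v 2)) * h2
    rw [key]
    exact S.add_mem (S.add_mem (S.smul_mem _ hwS) (S.smul_mem _ hxS)) (S.smul_mem _ hyzS)
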